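/- Let P ∈ R[y] with R real closed and deg P = p ≥ 1, and let θ₁ ≠ θ₂ be real numbers. Let η₁, η₂ be the sign vectors (sign P^{(k)}(θᵢ))_{0≤k≤p} (with both having the sign of the leading coefficient at index p). If η₁ ≠ η₂, and q is the largest index k with η₁(k) ≠ η₂(k), then it is not possible that η₁(k) = η₂(k) = 0 for some k with q < k < p. -/
import Mathlib

/-- The sign of a real number as an integer. -/
noncomputable def sgn (a : ℝ) : ℤ := if a < 0 then -1 else if a = 0 then 0 else 1

lemma sgn_eq_zero_iff {a : ℝ} : sgn a = 0 ↔ a = 0 := by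
  rcases lt_trichotomy a 0 with h | h | h
  · simp [sgn, h, h.ne]
  · simp [sgn, h]
  · simp [sgn, h.ne', not_lt.mpr h.le]

lemma sgn_eq_one_iff {a : ℝ} : sgn a = 1 ↔ 0 < a := by
  rcases lt_trichotomy a 0 with h | h | h
  · simp [sgn, h, not_lt.mpr h.le]
  · simp [sgn, h]
  · simp [sgn, h, h.ne', not_lt.mpr h.le]

lemma sgn_eq_neg_one_iff {a : ℝ} : sgn a = -1 ↔ a < 0 := by
  rcases lt_trichotomy a 0 with h | h | h
  · simp [sgn, h]
  · simp [sgn, h]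
  · simp [sgn, h.ne', not_lt.mpr h.le]

open Polynomial in
/-- If the signs of all derivatives of order ≥ 1 of `Q` agree at `θ₁ < θ₂`, then the first
derivative of `Q` has constant sign on `[θ₁, θ₂]`. -/
lemma const_sign_deriv : ∀ n : ℕ, ∀ Q : Polynomial ℝ, Q.natDegree ≤ n →
    ∀ θ₁ θ₂ : ℝ, θ₁ < θ₂ →
    (∀ j, 1 ≤ j →
      sgn ((derivative^[j] Q).eval θ₁) = sgn ((derivative^[j] Q).eval θ₂)) →
    ∀ x ∈ Set.Icc θ₁ θ₂, sgn (Q.derivative.eval x) = sgn (Q.derivative.eval θ₁) := by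
  intro n
  induction n with
  | zero =>
    intro Q hQ θ₁ θ₂ _ _ x _
    rw [derivative_of_natDegree_zero (Nat.le_zero.mp hQ)]
    simp
  | succ n ih =>
    intro Q hQ θ₁ θ₂ h12 hsig x hx
    -- apply IH to Q'
    have hQ' : Q.derivative.natDegree ≤ n := by
      have := Polynomial.natDegree_derivative_le Q
      omega
    have hsig' : ∀ j, 1 ≤ j →
        sgn ((derivative^[j] Q.derivative).eval θ₁) =
          sgn ((derivative^[j] Q.derivative).eval θ₂) := by
      intro j hj
      have h1 : derivative^[j] Q.derivative = derivative^[j + 1] Q := by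
        rw [Function.iterate_add_apply]; simp
      rw [h1]
      exact hsig (j + 1) (by omega)
    have key := ih Q.derivative hQ' θ₁ θ₂ h12 hsig'
    -- constant sign of Q'' on Icc
    rcases lt_trichotomy (Q.derivative.derivative.eval θ₁) 0 with ht | ht | ht
    · -- Q'' < 0 on Icc, so Q' strictly decreasing
      have hneg : ∀ y ∈ Set.Icc θ₁ θ₂, Q.derivative.derivative.eval y < 0 := by
        intro y hy
        have := key y hy
        rw [sgn_eq_neg_one_iff.mpr ht] at this
        exact sgn_eq_neg_one_iff.mp this
      have hanti : StrictAntiOn (fun y => Q.derivative.eval y) (Set.Icc θ₁ θ₂) := by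
        apply strictAntiOn_of_deriv_neg (convex_Icc _ _)
        · exact (Polynomial.continuous_aeval _).continuousOn
        · intro y hy
          rw [interior_Icc] at hy
          rw [Polynomial.deriv]
          exact hneg y (Set.mem_Icc_of_Ioo hy)
      have hs := hsig 1 le_rfl
      simp only [Function.iterate_one] at hs
      rcases lt_trichotomy (Q.derivative.eval θ₁) 0 with hd | hd | hd
      · -- Q'(θ₁) < 0, Q' decreasing, so negative on [θ₁, θ₂]
        rcases eq_or_lt_of_le hx.1 with rfl | hx1
        · rfl
        · have : Q.derivative.eval x < Q.derivative.eval θ₁ :=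
            hanti (Set.left_mem_Icc.mpr h12.le) hx hx1
          rw [sgn_eq_neg_one_iff.mpr hd, sgn_eq_neg_one_iff.mpr (by linarith)]
      · -- Q'(θ₁) = 0 = Q'(θ₂), contradicts strict anti
        exfalso
        have h2 : Q.derivative.eval θ₂ = 0 := by
          apply sgn_eq_zero_iff.mp
          rw [← hs, hd]
          exact sgn_eq_zero_iff.mpr rfl
        have : Q.derivative.eval θ₂ < Q.derivative.eval θ₁ :=
          hanti (Set.left_mem_Icc.mpr h12.le) (Set.right_mem_Icc.mpr h12.le) h12
        rw [hd, h2] at this; exact lt_irrefl 0 this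
      · -- Q'(θ₁) > 0 so Q'(θ₂) > 0 and Q' > 0 on [θ₁, θ₂] by anti
        have h2 : 0 < Q.derivative.eval θ₂ := by
          rw [sgn_eq_one_iff.mpr hd] at hs
          exact sgn_eq_one_iff.mp hs.symm
        rcases eq_or_lt_of_le hx.2 with rfl | hx2
        · rw [hs]
        · have : Q.derivative.eval θ₂ < Q.derivative.eval x :=
            hanti hx (Set.right_mem_Icc.mpr h12.le) hx2
          rw [sgn_eq_one_iff.mpr hd, sgn_eq_one_iff.mpr (by linarith)]
    · -- Q'' eval θ₁ = 0, so Q'' = 0 on Icc, so Q'' = 0, so Q' is constant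
      have hzero : ∀ y ∈ Set.Icc θ₁ θ₂, Q.derivative.derivative.eval y = 0 := by
        intro y hy
        have := key y hy
        rw [sgn_eq_zero_iff.mpr ht] at this
        exact sgn_eq_zero_iff.mp this
      have h0 : Q.derivative.derivative = 0 := by
        apply Polynomial.eq_zero_of_infinite_isRoot
        apply Set.Infinite.mono (s := Set.Icc θ₁ θ₂)
        · intro y hy; exact hzero y hy
        · rw [← Set.infinite_coe_iff]
          exact Set.Icc.infinite h12
      have hc : Q.derivative.natDegree = 0 :=
        Polynomial.natDegree_eq_zero_of_derivative_eq_zero h0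
      obtain ⟨c, hcc⟩ := Polynomial.natDegree_eq_zero.mp hc
      rw [← hcc]; simp
    · -- Q'' > 0 on Icc, so Q' strictly increasing
      have hpos : ∀ y ∈ Set.Icc θ₁ θ₂, 0 < Q.derivative.derivative.eval y := by
        intro y hy
        have := key y hy
        rw [sgn_eq_one_iff.mpr ht] at this
        exact sgn_eq_one_iff.mp this
      have hmono : StrictMonoOn (fun y => Q.derivative.eval y) (Set.Icc θ₁ θ₂) := by
        apply strictMonoOn_of_deriv_pos (convex_Icc _ _)
        · exact (Polynomial.continuous_aeval _).continuousOn
        · intro y hy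
          rw [interior_Icc] at hy
          rw [Polynomial.deriv]
          exact hpos y (Set.mem_Icc_of_Ioo hy)
      have hs := hsig 1 le_rfl
      simp only [Function.iterate_one] at hs
      rcases lt_trichotomy (Q.derivative.eval θ₁) 0 with hd | hd | hd
      · -- Q'(θ₂) < 0 too, mono gives Q' < 0 on [θ₁, θ₂]
        have h2 : Q.derivative.eval θ₂ < 0 := by
          rw [sgn_eq_neg_one_iff.mpr hd] at hs
          exact sgn_eq_neg_one_iff.mp hs.symm
        rcases eq_or_lt_of_le hx.2 with rfl | hx2
        · rw [hs]
        · have : Q.derivative.eval x < Q.derivative.eval θ₂ :=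
            hmono hx (Set.right_mem_Icc.mpr h12.le) hx2
          rw [sgn_eq_neg_one_iff.mpr hd, sgn_eq_neg_one_iff.mpr (by linarith)]
      · exfalso
        have h2 : Q.derivative.eval θ₂ = 0 := by
          apply sgn_eq_zero_iff.mp
          rw [← hs, hd]
          exact sgn_eq_zero_iff.mpr rfl
        have : Q.derivative.eval θ₁ < Q.derivative.eval θ₂ :=
          hmono (Set.left_mem_Icc.mpr h12.le) (Set.right_mem_Icc.mpr h12.le) h12
        rw [hd, h2] at this; exact lt_irrefl 0 this
      · rcases eq_or_lt_of_le hx.1 with rfl | hx1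
        · rfl
        · have : Q.derivative.eval θ₁ < Q.derivative.eval x :=
            hmono (Set.left_mem_Icc.mpr h12.le) hx hx1
          rw [sgn_eq_one_iff.mpr hd, sgn_eq_one_iff.mpr (by linarith)]

open Polynomial in
/-- Thom's uniqueness: two distinct roots of a nonzero polynomial cannot have the same
signs of all derivatives of order ≥ 1. -/
lemma thom_aux (Q : Polynomial ℝ) (hQ : Q ≠ 0) (θ₁ θ₂ : ℝ) (h12 : θ₁ < θ₂)
    (h1 : Q.eval θ₁ = 0) (h2 : Q.eval θ₂ = 0)
    (hsig : ∀ j, 1 ≤ j →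
      sgn ((derivative^[j] Q).eval θ₁) = sgn ((derivative^[j] Q).eval θ₂)) : False := by
  have key := const_sign_deriv Q.natDegree Q le_rfl θ₁ θ₂ h12 hsig
  rcases lt_trichotomy (Q.derivative.eval θ₁) 0 with hd | hd | hd
  · -- Q strictly decreasing on [θ₁,θ₂] yet both roots
    have hneg : ∀ y ∈ Set.Icc θ₁ θ₂, Q.derivative.eval y < 0 := by
      intro y hy
      have := key y hy
      rw [sgn_eq_neg_one_iff.mpr hd] at this
      exact sgn_eq_neg_one_iff.mp this
    have hanti : StrictAntiOn (fun y => Q.eval y) (Set.Icc θ₁ θ₂) := by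
      apply strictAntiOn_of_deriv_neg (convex_Icc _ _)
      · exact (Polynomial.continuous_aeval _).continuousOn
      · intro y hy
        rw [interior_Icc] at hy
        rw [Polynomial.deriv]
        exact hneg y (Set.mem_Icc_of_Ioo hy)
    have := hanti (Set.left_mem_Icc.mpr h12.le) (Set.right_mem_Icc.mpr h12.le) h12
    simp only [h1, h2] at this
    exact lt_irrefl 0 this
  · -- Q' ≡ 0 on [θ₁,θ₂], so Q' = 0, Q constant, Q = 0: contradiction
    have hzero : ∀ y ∈ Set.Icc θ₁ θ₂, Q.derivative.eval y = 0 := by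
      intro y hy
      have := key y hy
      rw [sgn_eq_zero_iff.mpr hd] at this
      exact sgn_eq_zero_iff.mp this
    have h0 : Q.derivative = 0 := by
      apply Polynomial.eq_zero_of_infinite_isRoot
      apply Set.Infinite.mono (s := Set.Icc θ₁ θ₂)
      · intro y hy; exact hzero y hy
      · rw [← Set.infinite_coe_iff]
        exact Set.Icc.infinite h12
    obtain ⟨c, hcc⟩ := Polynomial.natDegree_eq_zero.mp
      (Polynomial.natDegree_eq_zero_of_derivative_eq_zero h0)
    rw [← hcc] at h1 hQ
    simp at h1
    rw [h1] at hQ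
    simp at hQ
  · have hpos : ∀ y ∈ Set.Icc θ₁ θ₂, 0 < Q.derivative.eval y := by
      intro y hy
      have := key y hy
      rw [sgn_eq_one_iff.mpr hd] at this
      exact sgn_eq_one_iff.mp this
    have hmono : StrictMonoOn (fun y => Q.eval y) (Set.Icc θ₁ θ₂) := by
      apply strictMonoOn_of_deriv_pos (convex_Icc _ _)
      · exact (Polynomial.continuous_aeval _).continuousOn
      · intro y hy
        rw [interior_Icc] at hy
        rw [Polynomial.deriv]
        exact hpos y (Set.mem_Icc_of_Ioo hy)
    have := hmono (Set.left_mem_Icc.mpr h12.le) (Set.right_mem_Icc.mpr h12.le) h12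
    simp only [h1, h2] at this
    exact lt_irrefl 0 this

open Polynomial in
lemma iterate_derivative_ne_zero' (P : Polynomial ℝ) (k : ℕ) (hk : k ≤ P.natDegree)
    (hP : P ≠ 0) : derivative^[k] P ≠ 0 := by
  intro h
  have hc : (derivative^[k] P).coeff (P.natDegree - k) =
      (P.natDegree - k + k).descFactorial k • P.coeff (P.natDegree - k + k) :=
    Polynomial.coeff_iterate_derivative P _
  rw [h] at hc
  have hnk : P.natDegree - k + k = P.natDegree := by omega
  rw [hnk] at hc
  simp only [Polynomial.coeff_zero] at hc
  have h1 : (P.natDegree.descFactorial k : ℝ) ≠ 0 := by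
    simp only [ne_eq, Nat.cast_eq_zero]
    intro h0
    exact absurd (Nat.descFactorial_eq_zero_iff_lt.mp h0) (not_lt.mpr hk)
  have h2 : P.coeff P.natDegree ≠ 0 := Polynomial.leadingCoeff_ne_zero.mpr hP
  rw [nsmul_eq_mul] at hc
  exact (mul_ne_zero h1 h2) hc.symm

/-- Let `P` have degree `p ≥ 1` and `θ₁ ≠ θ₂` be reals with extended sign vectors
`ηᵢ k = sign P^{(k)}(θᵢ)` for `0 ≤ k ≤ p`. If `η₁ ≠ η₂` and `q` is the largest index where they
differ, then there is no `k` with `q < k < p` and `η₁ k = η₂ k = 0`. -/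
theorem no_common_zero_above_q (P : Polynomial ℝ) (p : ℕ) (hdeg : P.natDegree = p) (hp : 1 ≤ p)
    (θ₁ θ₂ : ℝ) (hne : θ₁ ≠ θ₂)
    (η₁ η₂ : ℕ → ℤ)
    (hη₁ : ∀ k ≤ p, η₁ k = sgn ((Polynomial.derivative^[k] P).eval θ₁))
    (hη₂ : ∀ k ≤ p, η₂ k = sgn ((Polynomial.derivative^[k] P).eval θ₂))
    (q : ℕ) (hqp : q ≤ p) (hq : η₁ q ≠ η₂ q)
    (hmax : ∀ k, q < k → k ≤ p → η₁ k = η₂ k) :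
    ¬ ∃ k, q < k ∧ k < p ∧ η₁ k = 0 ∧ η₂ k = 0 := by
  rintro ⟨k, hqk, hkp, h1z, h2z⟩
  set Q := Polynomial.derivative^[k] P with hQdef
  have hPne : P ≠ 0 := Polynomial.ne_zero_of_natDegree_gt (n := 0) (by omega)
  have hQne : Q ≠ 0 := iterate_derivative_ne_zero' P k (by omega) hPne
  have heval1 : Q.eval θ₁ = 0 := by
    have := hη₁ k (by omega)
    rw [h1z] at this
    exact sgn_eq_zero_iff.mp this.symm
  have heval2 : Q.eval θ₂ = 0 := by
    have := hη₂ k (by omega)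
    rw [h2z] at this
    exact sgn_eq_zero_iff.mp this.symm
  have hsig : ∀ j, 1 ≤ j →
      sgn ((Polynomial.derivative^[j] Q).eval θ₁) =
        sgn ((Polynomial.derivative^[j] Q).eval θ₂) := by
    intro j hj
    have hiter : Polynomial.derivative^[j] Q = Polynomial.derivative^[j + k] P := by
      rw [hQdef, ← Function.iterate_add_apply]
    rw [hiter]
    by_cases hle : j + k ≤ p
    · have h1 := hη₁ (j + k) hle
      have h2 := hη₂ (j + k) hle
      rw [← h1, ← h2]
      exact hmax (j + k) (by omega) hle
    · rw [Polynomial.iterate_derivative_eq_zero (p := P) (by omega)]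
      simp
  rcases hne.lt_or_gt with h12 | h21
  · exact thom_aux Q hQne θ₁ θ₂ h12 heval1 heval2 hsig
  · exact thom_aux Q hQne θ₂ θ₁ h21 heval2 heval1 (fun j hj => (hsig j hj).symm)
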